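/- arXiv:2203.16441 — 5 statements merged into one kernel-verified Lean document; each statement's English description precedes it below -/
import Mathlib

section
/- For every integer n ≥ 1, ∑_{k=0}^{n} ln C(n, k) ≥ n²/4 − (n/2)·ln n − 1/4, where C(n, k) denotes the binomial coefficient 'n choose k' (the k = 0 and k = n terms contribute ln 1 = 0). -/
open Finset

/-- `n^k * k! ≤ k^k * n.descFactorial k` for `k ≤ n`, by termwise product comparison. -/
lemma pow_mul_factorial_le_aux (n k : ℕ) (hk : k ≤ n) :
    n ^ k * k.factorial ≤ k ^ k * n.descFactorial k := by
  have h1 : n ^ k * k.factorial = ∏ i ∈ range k, n * (k - i) := by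
    rw [Finset.prod_mul_distrib, Finset.prod_const, Finset.card_range,
      ← Nat.descFactorial_self, Nat.descFactorial_eq_prod_range]
  have h2 : k ^ k * n.descFactorial k = ∏ i ∈ range k, k * (n - i) := by
    rw [Finset.prod_mul_distrib, Finset.prod_const, Finset.card_range,
      Nat.descFactorial_eq_prod_range]
  rw [h1, h2]
  apply Finset.prod_le_prod'
  intro i hi
  have hik : i < k := Finset.mem_range.mp hi
  have h1' : k * i ≤ n * i := Nat.mul_le_mul_right i hk
  calc n * (k - i) = n * k - n * i := Nat.mul_sub n k i
    _ ≤ n * k - k * i := Nat.sub_le_sub_left h1' (n * k)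
    _ = k * (n - i) := by rw [Nat.mul_sub, Nat.mul_comm k n]

/-- `(n/k)^k ≤ C(n,k)` in log form. -/
lemma log_choose_ge_aux (n k : ℕ) (hk : k ≤ n) :
    (k : ℝ) * (Real.log n - Real.log k) ≤ Real.log (Nat.choose n k) := by
  rcases Nat.eq_zero_or_pos k with rfl | hk0
  · simp
  have hn0 : 0 < n := lt_of_lt_of_le hk0 hk
  have hnat : n ^ k ≤ n.choose k * k ^ k := by
    have h := pow_mul_factorial_le_aux n k hk
    rw [Nat.descFactorial_eq_factorial_mul_choose] at h
    have h' : k.factorial * n ^ k ≤ k.factorial * (n.choose k * k ^ k) := by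
      calc k.factorial * n ^ k = n ^ k * k.factorial := by ring
        _ ≤ k ^ k * (k.factorial * n.choose k) := h
        _ = k.factorial * (n.choose k * k ^ k) := by ring
    exact Nat.le_of_mul_le_mul_left h' k.factorial_pos
  have hreal : ((n : ℝ) / k) ^ k ≤ (n.choose k : ℝ) := by
    rw [div_pow, div_le_iff₀ (by positivity)]
    exact_mod_cast hnat
  calc (k : ℝ) * (Real.log n - Real.log k)
      = Real.log (((n : ℝ) / k) ^ k) := by
        rw [Real.log_pow, Real.log_div (by positivity) (by positivity)]
    _ ≤ Real.log (n.choose k) := Real.log_le_log (by positivity) hreal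

/-- `∑_{k=0}^n k log k ≤ (n²/2 + 3n/4) log n − n²/4 + 1/4` for `n ≥ 1`. -/
lemma sum_k_log_k_aux (n : ℕ) (hn : 1 ≤ n) :
    ∑ k ∈ Finset.range (n + 1), (k : ℝ) * Real.log k ≤
      ((n : ℝ) ^ 2 / 2 + 3 * (n : ℝ) / 4) * Real.log n - (n : ℝ) ^ 2 / 4 + 1 / 4 := by
  induction n, hn using Nat.le_induction with
  | base =>
    rw [Finset.sum_range_succ, Finset.sum_range_succ, Finset.sum_range_zero]
    norm_num
  | succ m hm ih =>
    rw [Finset.sum_range_succ]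
    push_cast
    have hm1 : (1 : ℝ) ≤ (m : ℝ) := by exact_mod_cast hm
    have hL0 : 0 ≤ Real.log m := Real.log_nonneg hm1
    -- log (m+1) - log m ≥ 1/(m+1)
    have hpos : (0 : ℝ) < (m : ℝ) + 1 := by linarith
    have h0 : Real.log ((m : ℝ) / ((m : ℝ) + 1)) ≤ (m : ℝ) / ((m : ℝ) + 1) - 1 :=
      Real.log_le_sub_one_of_pos (by positivity)
    rw [Real.log_div (by linarith) (by linarith)] at h0
    have hsub : (m : ℝ) / ((m : ℝ) + 1) - 1 = -(1 / ((m : ℝ) + 1)) := by field_simp; ring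
    rw [hsub] at h0
    have hd : 1 ≤ ((m : ℝ) + 1) * (Real.log ((m : ℝ) + 1) - Real.log m) := by
      have h1 : 1 / ((m : ℝ) + 1) ≤ Real.log ((m : ℝ) + 1) - Real.log m := by linarith
      have := (div_le_iff₀ hpos).mp h1
      linarith
    nlinarith [ih, hd, hL0, hm1, mul_nonneg hL0 (by linarith : (0:ℝ) ≤ (m:ℝ) - 1),
      mul_le_mul_of_nonneg_left hd (by linarith : (0:ℝ) ≤ (m:ℝ) - 1)]

/-- For every integer `n ≥ 1`, `∑_{k=0}^{n} ln C(n, k) ≥ n²/4 − (n/2)·ln n − 1/4`. -/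
theorem sum_log_choose_ge (n : ℕ) (hn : 1 ≤ n) :
    (n : ℝ) ^ 2 / 4 - ((n : ℝ) / 2) * Real.log n - 1 / 4 ≤
      ∑ k ∈ Finset.range (n + 1), Real.log (Nat.choose n k) := by
  have key : ∑ k ∈ Finset.range (n + 1), ((k : ℝ) * (Real.log n - Real.log k)) ≤
      ∑ k ∈ Finset.range (n + 1), Real.log (Nat.choose n k) := by
    apply Finset.sum_le_sum
    intro k hk
    exact log_choose_ge_aux n k (Nat.lt_succ_iff.mp (Finset.mem_range.mp hk))
  have hgauss : ∑ k ∈ Finset.range (n + 1), (k : ℝ) = (n : ℝ) * ((n : ℝ) + 1) / 2 := by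
    have h := Finset.sum_range_id_mul_two (n + 1)
    have h' : ((∑ i ∈ Finset.range (n + 1), i : ℕ) : ℝ) * 2 = ((n + 1) * n : ℕ) := by
      exact_mod_cast congrArg (Nat.cast : ℕ → ℝ) h
    push_cast at h'
    linarith
  have hsum : ∑ k ∈ Finset.range (n + 1), ((k : ℝ) * (Real.log n - Real.log k)) =
      ((n : ℝ) * ((n : ℝ) + 1) / 2) * Real.log n -
        ∑ k ∈ Finset.range (n + 1), (k : ℝ) * Real.log k := by
    simp only [mul_sub]
    rw [Finset.sum_sub_distrib, ← Finset.sum_mul, hgauss]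
  have h2 := sum_k_log_k_aux n hn
  have hlog0 : 0 ≤ Real.log n := Real.log_nonneg (by exact_mod_cast hn)
  have hn1 : (1 : ℝ) ≤ (n : ℝ) := by exact_mod_cast hn
  nlinarith [key, hsum, h2, mul_nonneg hlog0 (by linarith : (0:ℝ) ≤ (n:ℝ) - 1)]
end

section
/- For every integer n ≥ 1, the product of all binomial coefficients in row n of Pascal's triangle satisfies ∏_{k=0}^{n} C(n, k) ≥ e^{n²/8 − 1}. -/
/-! Since `C(n, k) ≥ C(2j, j) ≥ 2 ^ j` for `j = min k (n - k)`, the product is at least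
`2 ^ S` with `S = ∑ₖ min k (n - k) = ⌊n² / 4⌋`, and `2 ^ S ≥ exp (S / 2) ≥ exp (n² / 8 - 1)`. -/

open Finset

namespace Nat

theorem two_pow_le_centralBinom : ∀ k : ℕ, 2 ^ k ≤ centralBinom k
  | 0 => by simp
  | k + 1 => by
    refine Nat.le_of_mul_le_mul_left ?_ k.succ_pos
    calc (k + 1) * 2 ^ (k + 1) = 2 * (k + 1) * 2 ^ k := by ring
      _ ≤ 2 * (2 * k + 1) * centralBinom k := by
          gcongr
          · omega
          · exact two_pow_le_centralBinom k
      _ = (k + 1) * centralBinom (k + 1) := (succ_mul_centralBinom_succ k).symm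

theorem two_pow_min_le_choose {n k : ℕ} (hk : k ≤ n) : 2 ^ min k (n - k) ≤ n.choose k := by
  rcases le_total k (n - k) with h | h
  · rw [min_eq_left h]
    exact (two_pow_le_centralBinom k).trans (choose_le_choose k (by omega))
  · rw [min_eq_right h, ← choose_symm hk]
    exact (two_pow_le_centralBinom (n - k)).trans (choose_le_choose (n - k) (by omega))

theorem sum_min_sub_add_two (n : ℕ) :
    ∑ k ∈ range (n + 3), min k (n + 2 - k) = ∑ k ∈ range (n + 1), min k (n - k) + (n + 1) := by
  rw [sum_range_succ, sum_range_succ']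
  have hshift : ∀ k ∈ range (n + 1), min (k + 1) (n + 2 - (k + 1)) = min k (n - k) + 1 := by
    intro k hk
    rw [mem_range] at hk
    omega
  rw [sum_congr rfl hshift, sum_add_distrib]
  simp

theorem sq_le_four_mul_sum_min_sub_add_one :
    ∀ n : ℕ, n ^ 2 ≤ 4 * ∑ k ∈ range (n + 1), min k (n - k) + 1
  | 0 => by simp
  | 1 => by decide
  | n + 2 => by
    have ih := sq_le_four_mul_sum_min_sub_add_one n
    rw [sum_min_sub_add_two]
    nlinarith

theorem two_pow_sum_min_sub_le_prod_choose (n : ℕ) :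
    2 ^ ∑ k ∈ range (n + 1), min k (n - k) ≤ ∏ k ∈ range (n + 1), n.choose k := by
  rw [← prod_pow_eq_pow_sum]
  exact prod_le_prod' fun k hk => two_pow_min_le_choose (Nat.lt_succ_iff.mp (mem_range.mp hk))

end Nat

theorem Real.exp_nat_div_two_le_two_pow (m : ℕ) : Real.exp (m / 2) ≤ 2 ^ m := by
  calc Real.exp (m / 2) ≤ Real.exp (m * Real.log 2) := by
        rw [div_eq_mul_one_div]
        gcongr
        linarith [Real.log_two_gt_d9]
    _ = 2 ^ m := by rw [Real.exp_nat_mul, Real.exp_log two_pos]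

theorem prod_choose_ge_general (n : ℕ) :
    Real.exp ((n : ℝ) ^ 2 / 8 - 1) ≤ ∏ k ∈ Finset.range (n + 1), (Nat.choose n k : ℝ) := by
  set S := ∑ k ∈ range (n + 1), min k (n - k)
  have hS : (n : ℝ) ^ 2 ≤ 4 * S + 1 := by exact_mod_cast Nat.sq_le_four_mul_sum_min_sub_add_one n
  calc Real.exp ((n : ℝ) ^ 2 / 8 - 1) ≤ Real.exp (S / 2) := by gcongr; linarith
    _ ≤ 2 ^ S := Real.exp_nat_div_two_le_two_pow S
    _ ≤ ∏ k ∈ range (n + 1), (n.choose k : ℝ) := by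
        exact_mod_cast Nat.two_pow_sum_min_sub_le_prod_choose n

/-- For every integer `n ≥ 1`, `∏_{k=0}^{n} C(n, k) ≥ e^{n²/8 − 1}`. -/
theorem prod_choose_ge (n : ℕ) (hn : 1 ≤ n) :
    Real.exp ((n : ℝ) ^ 2 / 8 - 1) ≤ ∏ k ∈ Finset.range (n + 1), (Nat.choose n k : ℝ) :=
  prod_choose_ge_general n
end

section
/- For every natural number ℓ, ∏_{N=1}^{2ℓ+1} (1 + C(2ℓ+1, N)) ≥ e^{(2ℓ+1)²/8 − 1}, where C(n, k) denotes the binomial coefficient 'n choose k'. -/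
open Finset

/-- For `N ≤ n`, `n^N * N! ≤ N^N * n.descFactorial N`. -/
lemma aux_pow_factorial_le (n N : ℕ) (h : N ≤ n) :
    n ^ N * N.factorial ≤ N ^ N * n.descFactorial N := by
  have h1 : n ^ N * N.factorial = ∏ i ∈ range N, n * (N - i) := by
    rw [prod_mul_distrib, prod_const, ← Nat.descFactorial_eq_prod_range,
      Nat.descFactorial_self, card_range]
  have h2 : N ^ N * n.descFactorial N = ∏ i ∈ range N, N * (n - i) := by
    rw [prod_mul_distrib, prod_const, ← Nat.descFactorial_eq_prod_range, card_range]
  rw [h1, h2]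
  apply Finset.prod_le_prod (fun i _ => Nat.zero_le _)
  intro i hi
  rw [mem_range] at hi
  have hiN : i ≤ N := hi.le
  have hin : i ≤ n := le_trans hiN h
  zify [hiN, hin]
  nlinarith [mul_le_mul_of_nonneg_right (show (N:ℤ) ≤ n by exact_mod_cast h)
    (show (0:ℤ) ≤ i by positivity)]

/-- `(n/N)^N ≤ choose n N` over ℝ. -/
lemma aux_pow_le_choose (n N : ℕ) (h1 : 1 ≤ N) (h2 : N ≤ n) :
    ((n : ℝ) / N) ^ N ≤ n.choose N := by
  have hN : (0:ℝ) < N := by exact_mod_cast h1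
  have key : n ^ N ≤ N ^ N * n.choose N := by
    have hle := aux_pow_factorial_le n N h2
    rw [Nat.descFactorial_eq_factorial_mul_choose] at hle
    have hf : 0 < N.factorial := N.factorial_pos
    have : n ^ N * N.factorial ≤ (N ^ N * n.choose N) * N.factorial := by
      calc n ^ N * N.factorial ≤ N ^ N * (N.factorial * n.choose N) := hle
        _ = (N ^ N * n.choose N) * N.factorial := by ring
    exact Nat.le_of_mul_le_mul_right this hf
  have keyR : (n : ℝ) ^ N ≤ (N : ℝ) ^ N * n.choose N := by exact_mod_cast key
  rw [div_pow, div_le_iff₀ (by positivity)]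
  linarith [keyR]

lemma aux_sum_id1 (n : ℕ) : (∑ N ∈ Icc 1 n, (N : ℝ)) * 2 = (n : ℝ) * ((n : ℝ) + 1) := by
  induction n with
  | zero => simp
  | succ m ih =>
    rw [Finset.sum_Icc_succ_top (by omega)]
    push_cast
    push_cast at ih
    linarith

lemma aux_sum_id2 (n : ℕ) :
    (∑ N ∈ Icc 1 n, (N : ℝ) ^ 2) * 6 = (n : ℝ) * ((n : ℝ) + 1) * (2 * (n : ℝ) + 1) := by
  induction n with
  | zero => simp
  | succ m ih =>
    rw [Finset.sum_Icc_succ_top (by omega)]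
    push_cast
    push_cast at ih
    nlinarith

/-- For every natural number `ℓ`, `∏_{N=1}^{2ℓ+1} (1 + C(2ℓ+1, N)) ≥ e^{(2ℓ+1)²/8 − 1}`. -/
theorem prod_one_add_choose_ge_exp (ℓ : ℕ) :
    Real.exp ((2 * (ℓ : ℝ) + 1) ^ 2 / 8 - 1) ≤
      ∏ N ∈ Finset.Icc 1 (2 * ℓ + 1), ((1 + Nat.choose (2 * ℓ + 1) N : ℕ) : ℝ) := by
  set n : ℕ := 2 * ℓ + 1 with hn
  have hnR : (n : ℝ) = 2 * (ℓ : ℝ) + 1 := by push_cast [hn]; ring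
  have hnpos : (0:ℝ) < n := by rw [hnR]; positivity
  -- pointwise bound
  have pointwise : ∀ N ∈ Icc 1 n,
      Real.exp ((N : ℝ) * (1 - (N : ℝ) / n)) ≤ ((1 + Nat.choose n N : ℕ) : ℝ) := by
    intro N hN
    rw [mem_Icc] at hN
    have hN1 : (1:ℝ) ≤ N := by exact_mod_cast hN.1
    have hNn : (N:ℝ) ≤ n := by exact_mod_cast hN.2
    have hNpos : (0:ℝ) < N := by linarith
    have hx : (0:ℝ) < (N:ℝ) / n := by positivity
    have hlog : 1 - (N:ℝ)/n ≤ Real.log ((n:ℝ)/N) := by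
      have h := Real.log_le_sub_one_of_pos hx
      rw [Real.log_div (ne_of_gt hNpos) (ne_of_gt hnpos)] at h
      rw [Real.log_div (ne_of_gt hnpos) (ne_of_gt hNpos)]
      linarith
    have h1 : Real.exp ((N : ℝ) * (1 - (N : ℝ) / n)) ≤ ((n:ℝ)/N) ^ N := by
      have hpos : (0:ℝ) < (n:ℝ)/N := by positivity
      rw [← Real.exp_log (x := ((n:ℝ)/N) ^ N) (by positivity), Real.log_pow]
      apply Real.exp_le_exp.mpr
      have : (N : ℝ) * (1 - (N : ℝ) / n) ≤ (N:ℝ) * Real.log ((n:ℝ)/N) :=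
        mul_le_mul_of_nonneg_left hlog (by linarith)
      simpa using this
    have h2 : ((n:ℝ)/N) ^ N ≤ (n.choose N : ℝ) := aux_pow_le_choose n N hN.1 hN.2
    have h3 : (n.choose N : ℝ) ≤ ((1 + n.choose N : ℕ) : ℝ) := by push_cast; linarith
    linarith
  have hsum : (∑ N ∈ Icc 1 n, (N : ℝ) * (1 - (N : ℝ) / n)) * n
      = (n : ℝ) * (∑ N ∈ Icc 1 n, (N : ℝ)) - (∑ N ∈ Icc 1 n, (N : ℝ) ^ 2) := by
    rw [Finset.sum_mul, Finset.mul_sum, ← Finset.sum_sub_distrib]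
    apply Finset.sum_congr rfl
    intro x _
    field_simp
  have hs1 := aux_sum_id1 n
  have hs2 := aux_sum_id2 n
  calc Real.exp ((2 * (ℓ : ℝ) + 1) ^ 2 / 8 - 1)
      ≤ Real.exp (∑ N ∈ Icc 1 n, (N : ℝ) * (1 - (N : ℝ) / n)) := by
        apply Real.exp_le_exp.mpr
        rw [← hnR] at *
        nlinarith [hsum, hs1, hs2, hnpos]
    _ = ∏ N ∈ Icc 1 n, Real.exp ((N : ℝ) * (1 - (N : ℝ) / n)) := Real.exp_sum _ _
    _ ≤ ∏ N ∈ Icc 1 n, ((1 + Nat.choose n N : ℕ) : ℝ) :=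
        Finset.prod_le_prod (fun i _ => (Real.exp_pos _).le) pointwise
end

section
/- Let d ≥ 1, let N > 0, and let ρ : ℝ^d → ℝ be a nonnegative integrable function with ∫_{ℝ^d} ρ = N. Define the Harriman phase f(t) = (2π/N)·∫_{−∞}^{t} ∫_{ℝ^{d−1}} ρ(s, x², …, x^d) dx² ⋯ dx^d ds for t ∈ ℝ, and for each k ∈ ℤ the orbital φ_k(x) = √(ρ(x)/N)·e^{i k f(x¹)}, where x = (x¹, …, x^d). Then the family (φ_k)_{k ∈ ℤ} is orthonormal in L²(ℝ^d; ℂ): for all ℓ, m ∈ ℤ, ∫_{ℝ^d} conj(φ_ℓ(x))·φ_m(x) dx = 1 if ℓ = m and 0 otherwise. -/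
open MeasureTheory Set
open scoped NNReal ENNReal


lemma push_cdf (N : ℝ) (hN : 0 < N) (μ : Measure ℝ) [IsFiniteMeasure μ]
    (huniv : μ Set.univ = ENNReal.ofReal N)
    (F : ℝ → ℝ) (hF : ∀ t, F t = (μ (Iic t)).toReal)
    (hcont : Continuous F) :
    Measure.map F μ = volume.restrict (Set.Ioc 0 N) := by
  have hFmono : Monotone F := fun s t hst => by
    rw [hF, hF]; exact ENNReal.toReal_mono (measure_ne_top μ _) (measure_mono (Iic_subset_Iic.2 hst))
  have hF0 : ∀ t, 0 ≤ F t := fun t => by rw [hF]; exact ENNReal.toReal_nonneg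
  have hFN : ∀ t, F t ≤ N := fun t => by
    rw [hF]
    have : μ (Iic t) ≤ ENNReal.ofReal N := huniv ▸ measure_mono (subset_univ _)
    calc (μ (Iic t)).toReal ≤ (ENNReal.ofReal N).toReal :=
          ENNReal.toReal_mono ENNReal.ofReal_ne_top this
      _ = N := ENNReal.toReal_ofReal hN.le
  have htop : Filter.Tendsto F Filter.atTop (nhds N) := by
    have h1 : Filter.Tendsto (fun t => μ (Iic t)) Filter.atTop (nhds (μ univ)) :=
      tendsto_measure_Iic_atTop μ
    have h2 := (ENNReal.tendsto_toReal (measure_ne_top μ univ)).comp h1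
    have hFeq : F = fun t => (μ (Iic t)).toReal := funext hF
    rw [hFeq, huniv] at *
    simpa [Function.comp_def, ENNReal.toReal_ofReal hN.le] using h2
  have hbot : Filter.Tendsto F Filter.atBot (nhds 0) := by
    have h1 : Filter.Tendsto (μ ∘ Iic) Filter.atBot (nhds (μ (⋂ t : ℝ, Iic t))) :=
      tendsto_measure_iInter_atBot (fun t => nullMeasurableSet_Iic)
        (fun s t hst => Iic_subset_Iic.2 hst) ⟨0, measure_ne_top μ _⟩
    have hempty : (⋂ t : ℝ, Iic t) = ∅ := by
      ext x
      simp only [mem_iInter, mem_Iic, mem_empty_iff_false, iff_false]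
      push_neg
      exact ⟨x - 1, by linarith⟩
    rw [hempty, measure_empty] at h1
    have h2 := (ENNReal.tendsto_toReal (by simp : (0:ENNReal) ≠ ⊤)).comp h1
    have hFeq : F = fun t => (μ (Iic t)).toReal := funext hF
    rw [hFeq]
    simpa [Function.comp_def] using h2
  have hkey : ∀ a : ℝ, μ (F ⁻¹' Iic a) = ENNReal.ofReal (min a N) := by
    intro a
    rcases le_or_gt N a with haN | haN
    · have : F ⁻¹' Iic a = univ := eq_univ_of_forall fun t => le_trans (hFN t) haN
      rw [this, huniv, min_eq_right haN]
    · -- a < N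
      have hbdd : BddAbove (F ⁻¹' Iic a) := by
        obtain ⟨t0, ht0⟩ : ∃ t0, a < F t0 := by
          have := htop.eventually (eventually_gt_nhds haN)
          exact this.exists
        refine ⟨t0, fun t ht => ?_⟩
        by_contra h
        push_neg at h
        exact absurd (le_trans (hFmono h.le) ht) (not_le.2 ht0)
      rcases (F ⁻¹' Iic a).eq_empty_or_nonempty with hemp | hne
      · rw [hemp, measure_empty]
        have ha0 : a ≤ 0 := by
          by_contra h
          push_neg at h
          obtain ⟨t, ht⟩ := (hbot.eventually (eventually_lt_nhds h)).exists
          have : t ∈ F ⁻¹' Iic a := le_of_lt ht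
          rw [hemp] at this
          exact this
        rw [min_eq_left haN.le, ENNReal.ofReal_eq_zero.2 ha0]
      · have hclosed : IsClosed (F ⁻¹' Iic a) := isClosed_Iic.preimage hcont
        set s := sSup (F ⁻¹' Iic a) with hs
        have hmem : s ∈ F ⁻¹' Iic a := hclosed.csSup_mem hne hbdd
        have hIic : F ⁻¹' Iic a = Iic s := by
          apply Subset.antisymm
          · exact fun t ht => le_csSup hbdd ht
          · exact fun t ht => mem_preimage.2 (le_trans (hFmono ht) hmem)
        have hFsa : F s = a := by
          refine le_antisymm hmem ?_
          have h1 : Filter.Tendsto F (nhdsWithin s (Ioi s)) (nhds (F s)) :=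
            (hcont.tendsto s).mono_left nhdsWithin_le_nhds
          refine ge_of_tendsto h1 ?_
          filter_upwards [self_mem_nhdsWithin] with t ht
          by_contra h
          push_neg at h
          have : t ∈ Iic s := hIic ▸ mem_preimage.2 h.le
          exact absurd (mem_Iic.1 this) (not_le.2 ht)
        have ha0 : 0 ≤ a := hFsa ▸ hF0 s
        rw [hIic, min_eq_left haN.le, ← hFsa, hF, ENNReal.ofReal_toReal (measure_ne_top μ _)]
  haveI : IsFiniteMeasure (Measure.map F μ) := by
    constructor
    rw [Measure.map_apply hcont.measurable MeasurableSet.univ]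
    exact measure_lt_top μ _
  refine Measure.ext_of_Iic _ _ fun a => ?_
  rw [Measure.map_apply hcont.measurable measurableSet_Iic, hkey a,
    Measure.restrict_apply measurableSet_Iic]
  have : Iic a ∩ Ioc 0 N = Ioc 0 (min a N) := by
    ext x; simp [and_comm, and_assoc, le_min_iff]; tauto
  rw [this, Real.volume_Ioc, sub_zero]


lemma cont_cdf (d : ℕ) (i : Fin d) (g : (Fin d → ℝ) → ℝ) (hg : Integrable g)
    (hmeas : StronglyMeasurable g) (hg0 : ∀ x, 0 ≤ g x) :
    Continuous (fun t => ∫ x in {x : Fin d → ℝ | x i ≤ t}, g x) := by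
  rw [continuous_iff_seqContinuous]
  intro u t hu
  have hset : ∀ s : ℝ, MeasurableSet {x : Fin d → ℝ | x i ≤ s} := fun s =>
    measurableSet_le (measurable_pi_apply i) measurable_const
  have hrw : ∀ s : ℝ, ∫ x in {x : Fin d → ℝ | x i ≤ s}, g x
      = ∫ x, ({x : Fin d → ℝ | x i ≤ s}).indicator g x := fun s =>
    (integral_indicator (hset s)).symm
  simp only [hrw]
  have hae : ∀ᵐ x : Fin d → ℝ, x i ≠ t := by
    rw [volume_pi]
    exact Measure.ae_eval_ne (fun _ : Fin d => (volume : Measure ℝ)) i t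
  refine tendsto_integral_of_dominated_convergence g
    (fun n => (hmeas.indicator (hset (u n))).aestronglyMeasurable)
    hg ?_ ?_
  · intro n
    filter_upwards with x
    rw [Real.norm_eq_abs]
    by_cases hx : x ∈ {x : Fin d → ℝ | x i ≤ u n}
    · rw [indicator_of_mem hx, abs_of_nonneg (hg0 x)]
    · rw [indicator_of_notMem hx, abs_zero]; exact hg0 x
  · filter_upwards [hae] with x hx
    rcases lt_or_gt_of_ne hx with h | h
    · refine tendsto_const_nhds.congr' ?_
      filter_upwards [hu.eventually (eventually_gt_nhds h)] with n hn
      rw [indicator_of_mem (show x ∈ {x : Fin d → ℝ | x i ≤ t} from le_of_lt h),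
        indicator_of_mem (show x ∈ {x : Fin d → ℝ | x i ≤ u n} from le_of_lt hn)]
    · refine tendsto_const_nhds.congr' ?_
      filter_upwards [hu.eventually (eventually_lt_nhds h)] with n hn
      rw [indicator_of_notMem (show x ∉ {x : Fin d → ℝ | x i ≤ t} from not_le.2 h),
        indicator_of_notMem (show x ∉ {x : Fin d → ℝ | x i ≤ u n} from not_le.2 hn)]


/-- The Harriman orbitals `φ_k(x) = √(ρ(x)/N)·e^{i k f(x¹)}`, with
`f(t) = (2π/N)·∫_{x¹ ≤ t} ρ`, form an orthonormal family in `L²(ℝ^d; ℂ)`. -/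
theorem harriman_orbitals_orthonormal (d : ℕ) (hd : 0 < d) (N : ℝ) (hN : 0 < N)
    (ρ : (Fin d → ℝ) → ℝ) (hρ0 : ∀ x, 0 ≤ ρ x) (hρint : Integrable ρ)
    (hρN : ∫ x, ρ x = N)
    (f : ℝ → ℝ)
    (hf : ∀ t : ℝ, f t = (2 * Real.pi / N) * ∫ y in {y : Fin d → ℝ | y ⟨0, hd⟩ ≤ t}, ρ y)
    (φ : ℤ → (Fin d → ℝ) → ℂ)
    (hφ : ∀ (k : ℤ) (x : Fin d → ℝ),
      φ k x = (Real.sqrt (ρ x / N) : ℂ) * Complex.exp (Complex.I * (k : ℂ) * (f (x ⟨0, hd⟩) : ℂ))) :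
    ∀ ℓ m : ℤ, ∫ x, (starRingEnd ℂ) (φ ℓ x) * φ m x = if ℓ = m then 1 else 0 := by
  intro ℓ m
  set i0 : Fin d := ⟨0, hd⟩ with hi0
  -- measurable nonnegative representative of ρ
  set ρ' : (Fin d → ℝ) → ℝ := fun x => max (hρint.1.mk ρ x) 0 with hρ'
  have hmeas : StronglyMeasurable ρ' := (hρint.1.stronglyMeasurable_mk.measurable.max measurable_const).stronglyMeasurable
  have hae : ρ' =ᵐ[volume] ρ := by
    filter_upwards [hρint.1.ae_eq_mk] with x hx
    have h1 : ρ' x = max (hρint.1.mk ρ x) 0 := rfl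
    rw [h1, ← hx]
    exact max_eq_left (hρ0 x)
  have hρ'0 : ∀ x, 0 ≤ ρ' x := fun x => le_max_right _ _
  have hρ'int : Integrable ρ' := hρint.congr hae.symm
  have hρ'N : ∫ x, ρ' x = N := by rw [integral_congr_ae hae, hρN]
  have hset : ∀ t : ℝ, MeasurableSet {x : Fin d → ℝ | x i0 ≤ t} := fun t =>
    measurableSet_le (measurable_pi_apply i0) measurable_const
  set F : ℝ → ℝ := fun t => ∫ x in {x : Fin d → ℝ | x i0 ≤ t}, ρ' x with hFdef
  have hF0 : ∀ t, 0 ≤ F t := fun t => setIntegral_nonneg (hset t) fun x _ => hρ'0 x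
  have hFf : ∀ t, f t = (2 * Real.pi / N) * F t := by
    intro t
    rw [hf t]
    congr 1
    exact (setIntegral_congr_ae (hset t) (by filter_upwards [hae] with x hx _; exact hx)).symm
  have hFcont : Continuous F := cont_cdf d i0 ρ' hρ'int hmeas hρ'0
  set ν : Measure (Fin d → ℝ) := volume.withDensity fun x => ENNReal.ofReal (ρ' x) with hν
  set μ : Measure ℝ := ν.map (fun x => x i0) with hμ
  have hνset : ∀ s : Set (Fin d → ℝ), MeasurableSet s → ν s = ENNReal.ofReal (∫ x in s, ρ' x) := by
    intro s hs
    rw [hν, withDensity_apply _ hs,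
      ← ofReal_integral_eq_lintegral_ofReal hρ'int.integrableOn
        (ae_restrict_of_ae (Filter.Eventually.of_forall hρ'0))]
  have hμIic : ∀ t, μ (Iic t) = ENNReal.ofReal (F t) := by
    intro t
    rw [hμ, Measure.map_apply (measurable_pi_apply i0) measurableSet_Iic]
    exact hνset _ (hset t)
  have hμuniv : μ univ = ENNReal.ofReal N := by
    rw [hμ, Measure.map_apply (measurable_pi_apply i0) MeasurableSet.univ, preimage_univ,
      hνset _ MeasurableSet.univ, Measure.restrict_univ, hρ'N]
  haveI : IsFiniteMeasure ν := by
    constructor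
    rw [hνset _ MeasurableSet.univ]
    exact ENNReal.ofReal_lt_top
  haveI : IsFiniteMeasure μ := by
    constructor
    rw [hμuniv]
    exact ENNReal.ofReal_lt_top
  have hFt : ∀ t, F t = (μ (Iic t)).toReal := fun t => by
    rw [hμIic t, ENNReal.toReal_ofReal (hF0 t)]
  have hmap : Measure.map F μ = volume.restrict (Set.Ioc 0 N) :=
    push_cdf N hN μ hμuniv F hFt hFcont
  -- rewrite the integrand
  have hint_eq : ∀ x : Fin d → ℝ, (starRingEnd ℂ) (φ ℓ x) * φ m x
      = ((ρ x / N : ℝ) : ℂ) * Complex.exp (Complex.I * ((m : ℂ) - (ℓ : ℂ)) * (f (x i0) : ℂ)) := by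
    intro x
    rw [hφ, hφ, map_mul, Complex.conj_ofReal, ← Complex.exp_conj, mul_mul_mul_comm,
      ← Complex.ofReal_mul, Real.mul_self_sqrt (div_nonneg (hρ0 x) hN.le), ← Complex.exp_add]
    congr 2
    simp only [map_mul, Complex.conj_I, Complex.conj_ofReal, map_intCast]
    ring
  simp only [hint_eq]
  by_cases hlm : ℓ = m
  · subst hlm
    rw [if_pos rfl]
    simp only [sub_self, mul_zero, zero_mul, Complex.exp_zero, mul_one]
    rw [show (∫ x : Fin d → ℝ, ((ρ x / N : ℝ) : ℂ)) = ((∫ x : Fin d → ℝ, ρ x / N : ℝ) : ℂ)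
      from integral_ofReal, integral_div, hρN, div_self hN.ne', Complex.ofReal_one]
  · rw [if_neg hlm]
    set c : ℝ := 2 * Real.pi / N with hc
    set z : ℂ := Complex.I * ((m : ℂ) - (ℓ : ℂ)) * (c : ℂ) with hz
    have hzne : z ≠ 0 := by
      rw [hz]
      apply mul_ne_zero (mul_ne_zero Complex.I_ne_zero _)
      · rw [Ne, Complex.ofReal_eq_zero, hc]
        positivity
      · rw [sub_ne_zero]
        exact fun h => hlm (by exact_mod_cast h.symm)
    have hstep1 : ∫ x, ((ρ x / N : ℝ) : ℂ)
          * Complex.exp (Complex.I * ((m : ℂ) - (ℓ : ℂ)) * (f (x i0) : ℂ))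
        = ∫ x, (fun x => (ρ' x).toNNReal) x
            • ((1 / N : ℝ) • Complex.exp (z * (F (x i0) : ℂ))) := by
      apply integral_congr_ae
      filter_upwards [hae] with x hx
      rw [NNReal.smul_def, Real.coe_toNNReal _ (hρ'0 x), smul_smul, Complex.real_smul, hx]
      rw [hFf (x i0)]
      push_cast
      ring_nf
      rw [hz]; ring_nf
    rw [hstep1, ← integral_withDensity_eq_integral_smul hmeas.measurable.real_toNNReal]
    have hνeq : (volume.withDensity fun x => (((ρ' x).toNNReal : ℝ≥0) : ℝ≥0∞)) = ν := rfl
    rw [hνeq, integral_smul]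
    have hg1 : AEStronglyMeasurable (fun t : ℝ => Complex.exp (z * (F t : ℂ))) μ :=
      (Complex.continuous_exp.comp (continuous_const.mul
        (Complex.continuous_ofReal.comp hFcont))).aestronglyMeasurable
    have hg2 : AEStronglyMeasurable (fun u : ℝ => Complex.exp (z * (u : ℂ)))
        (Measure.map F μ) :=
      (Complex.continuous_exp.comp (continuous_const.mul
        Complex.continuous_ofReal)).aestronglyMeasurable
    have e1 : ∫ t, Complex.exp (z * (F t : ℂ)) ∂μ
        = ∫ x, Complex.exp (z * (F (x i0) : ℂ)) ∂ν := by
      rw [hμ]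
      exact integral_map (f := fun t : ℝ => Complex.exp (z * (F t : ℂ)) )
        (φ := fun x : Fin d → ℝ => x i0) (measurable_pi_apply i0).aemeasurable
        (by rw [← hμ]; exact hg1)
    have e2 : ∫ u, Complex.exp (z * (u : ℂ)) ∂(Measure.map F μ)
        = ∫ t, Complex.exp (z * (F t : ℂ)) ∂μ :=
      integral_map hFcont.measurable.aemeasurable hg2
    rw [← e1, ← e2, hmap, ← intervalIntegral.integral_of_le hN.le,
      integral_exp_mul_complex hzne]
    have hzN : z * (N : ℂ) = ((m - ℓ : ℤ) : ℂ) * (2 * Real.pi * Complex.I) := by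
      have hNc : (N : ℂ) ≠ 0 := Complex.ofReal_ne_zero.2 hN.ne'
      rw [hz, hc]
      push_cast
      field_simp
    rw [hzN, Complex.exp_int_mul_two_pi_mul_I, Complex.ofReal_zero, mul_zero,
      Complex.exp_zero, sub_self, zero_div, smul_zero]
end

section
/- Let d ≥ 1, let N ≥ 1 be an integer, and let u : ℝ^d → ℝ be a nonnegative, continuously differentiable function such that u² is integrable with ∫_{ℝ^d} u² = N and |∇u|² is integrable. Set ρ = u², define the Harriman phase f(t) = (2π/N)·∫_{−∞}^{t} ∫_{ℝ^{d−1}} ρ(s, x², …, x^d) dx² ⋯ dx^d ds, and for k ∈ ℤ the orbital φ_k(x) = √(ρ(x)/N)·e^{i k f(x¹)}. Then ∫_{ℝ^d} |∇φ_k|² ≤ (1/N)·(1 + 16π²k²)·∫_{ℝ^d} |∇u|². -/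
open MeasureTheory Complex

lemma phi_sum_deriv (n : ℕ) (u : (Fin (n+1) → ℝ) → ℝ) (f : ℝ → ℝ) (k : ℤ) (c : ℝ) (hc : 0 < c)
    (x : Fin (n+1) → ℝ) (hu : DifferentiableAt ℝ u x) (hfd : DifferentiableAt ℝ f (x 0)) :
    ∑ j : Fin (n+1), ‖fderiv ℝ (fun y => ((u y / c : ℝ) : ℂ) *
        Complex.exp (Complex.I * (k : ℂ) * (f (y 0) : ℂ))) x (Pi.single j 1)‖ ^ 2
      = (∑ j : Fin (n+1), ‖fderiv ℝ u x (Pi.single j 1)‖ ^ 2) / c ^ 2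
        + (k : ℝ) ^ 2 * (deriv f (x 0)) ^ 2 * (u x) ^ 2 / c ^ 2 := by
  set m := deriv f (x 0) with hm
  set P : (Fin (n+1) → ℝ) →L[ℝ] ℝ := ContinuousLinearMap.proj 0 with hP
  have hP0 : HasFDerivAt (fun y : Fin (n+1) → ℝ => y 0) P x := P.hasFDerivAt
  have h1 : HasFDerivAt (fun y : Fin (n+1) → ℝ => f (y 0)) (m • P) x :=
    (hfd.hasDerivAt).comp_hasFDerivAt x hP0
  have h2 : HasFDerivAt (fun y : Fin (n+1) → ℝ => ((f (y 0) : ℝ) : ℂ))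
      (Complex.ofRealCLM.comp (m • P)) x := Complex.ofRealCLM.hasFDerivAt.comp x h1
  have h3 : HasFDerivAt (fun y : Fin (n+1) → ℝ => Complex.I * (k : ℂ) * ((f (y 0) : ℝ) : ℂ))
      ((Complex.I * (k : ℂ)) • (Complex.ofRealCLM.comp (m • P))) x := h2.const_mul _
  have h4 := h3.cexp
  have h5 : HasFDerivAt (fun y : Fin (n+1) → ℝ => ((u y / c : ℝ) : ℂ))
      (Complex.ofRealCLM.comp (c⁻¹ • fderiv ℝ u x)) x := by
    have h0 : HasFDerivAt (fun y => c⁻¹ * u y) (c⁻¹ • fderiv ℝ u x) x := hu.hasFDerivAt.const_mul c⁻¹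
    have h' := Complex.ofRealCLM.hasFDerivAt.comp x h0
    have heq : (fun y => ((u y / c : ℝ) : ℂ)) = ⇑Complex.ofRealCLM ∘ fun y => c⁻¹ * u y := by
      funext y; simp [div_eq_inv_mul]
    rw [heq]; exact h'
  have hprod := h5.mul h4
  have hD := hprod.fderiv
  rw [show (fun y : Fin (n+1) → ℝ => ((u y / c : ℝ) : ℂ) * Complex.exp (Complex.I * (k : ℂ) * (f (y 0) : ℂ)))
      = ((fun y => ((u y / c : ℝ) : ℂ)) * fun y => Complex.exp (Complex.I * (k : ℂ) * (f (y 0) : ℂ))) from rfl, hD]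
  have key : ∀ j : Fin (n+1),
      ‖(((u x / c : ℝ) : ℂ) • (Complex.exp (Complex.I * (k : ℂ) * ((f (x 0) : ℝ) : ℂ)) •
          ((Complex.I * (k : ℂ)) • (Complex.ofRealCLM.comp (m • P))))
        + Complex.exp (Complex.I * (k : ℂ) * ((f (x 0) : ℝ) : ℂ)) •
          (Complex.ofRealCLM.comp (c⁻¹ • fderiv ℝ u x))) (Pi.single j 1)‖ ^ 2
      = (fderiv ℝ u x (Pi.single j 1) / c) ^ 2
        + (u x / c * ((k : ℝ) * m) * ((Pi.single j 1 : Fin (n+1) → ℝ) 0)) ^ 2 := by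
    intro j
    set a : ℝ := fderiv ℝ u x (Pi.single j 1)
    set pr : ℝ := (Pi.single j 1 : Fin (n+1) → ℝ) 0
    set θ : ℂ := Complex.I * (k : ℂ) * ((f (x 0) : ℝ) : ℂ)
    have hval : (((u x / c : ℝ) : ℂ) • (Complex.exp θ • ((Complex.I * (k : ℂ)) •
          (Complex.ofRealCLM.comp (m • P)))) + Complex.exp θ •
          (Complex.ofRealCLM.comp (c⁻¹ • fderiv ℝ u x))) (Pi.single j 1)
        = Complex.exp θ * (((a / c : ℝ) : ℂ) + ((u x / c * ((k:ℝ) * m) * pr : ℝ) : ℂ) * Complex.I) := by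
      simp only [ContinuousLinearMap.add_apply, ContinuousLinearMap.smul_apply,
        ContinuousLinearMap.coe_comp', Function.comp_apply, Complex.ofRealCLM_apply,
        ContinuousLinearMap.coe_smul', Pi.smul_apply, ContinuousLinearMap.proj_apply,
        smul_eq_mul]
      push_cast
      ring_nf
      rfl
    rw [hval]
    rw [norm_mul]
    have hθ : ‖Complex.exp θ‖ = 1 := by
      simp only [θ, Complex.norm_exp]
      have : (Complex.I * (k : ℂ) * ((f (x 0) : ℝ) : ℂ)).re = 0 := by simp
      rw [this, Real.exp_zero]
    rw [hθ, one_mul]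
    rw [Complex.sq_norm, Complex.normSq_add_mul_I]
  rw [Finset.sum_congr rfl fun j _ => key j]
  rw [Finset.sum_add_distrib]
  have hpr : ∀ j : Fin (n+1), ((Pi.single j 1 : Fin (n+1) → ℝ) 0 : ℝ) = if j = 0 then 1 else 0 := by
    intro j; rw [Pi.single_apply]; simp [eq_comm]
  have : ∑ j : Fin (n+1), (u x / c * ((k : ℝ) * m) * ((Pi.single j 1 : Fin (n+1) → ℝ) 0)) ^ 2
      = (k:ℝ)^2 * m^2 * (u x)^2 / c^2 := by
    rw [Finset.sum_congr rfl fun j _ => by rw [hpr j]]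
    have h2 : ∀ j : Fin (n+1), (u x / c * ((k : ℝ) * m) * if j = 0 then (1:ℝ) else 0) ^ 2
        = if j = 0 then (u x / c * ((k : ℝ) * m)) ^ 2 else 0 := by
      intro j; split <;> simp
    rw [Finset.sum_congr rfl fun j _ => h2 j, Finset.sum_ite_eq' Finset.univ (0 : Fin (n+1))]
    simp only [Finset.mem_univ, if_true]
    field_simp
  rw [this]
  congr 1
  rw [Finset.sum_div]
  refine Finset.sum_congr rfl fun j _ => ?_
  rw [Real.norm_eq_abs, _root_.sq_abs, div_pow]

set_option maxHeartbeats 1000000 in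
/-- Kinetic energy bound for the Harriman–Lieb orbitals: with `ρ = u²`,
`f(t) = (2π/N)·∫_{x¹ ≤ t} ρ` and `φ_k(x) = √(ρ(x)/N)·e^{i k f(x¹)}`, one has
`∫ |∇φ_k|² ≤ (1/N)·(1 + 16π²k²)·∫ |∇u|²`, where `|∇φ|² = ∑_j |∂_j φ|²`. -/
theorem harriman_orbital_kinetic_bound (d : ℕ) (hd : 0 < d) (N : ℕ) (hN : 1 ≤ N)
    (u : (Fin d → ℝ) → ℝ) (hu0 : ∀ x, 0 ≤ u x) (hu1 : ContDiff ℝ 1 u)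
    (huint : Integrable (fun x => u x ^ 2))
    (huN : ∫ x, u x ^ 2 = (N : ℝ))
    (hgradint : Integrable (fun x => ∑ j : Fin d, ‖fderiv ℝ u x (Pi.single j 1)‖ ^ 2))
    (ρ : (Fin d → ℝ) → ℝ) (hρ : ∀ x, ρ x = u x ^ 2)
    (f : ℝ → ℝ)
    (hf : ∀ t : ℝ, f t = (2 * Real.pi / N) * ∫ y in {y : Fin d → ℝ | y ⟨0, hd⟩ ≤ t}, ρ y)
    (φ : ℤ → (Fin d → ℝ) → ℂ)
    (hφ : ∀ (k : ℤ) (x : Fin d → ℝ),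
      φ k x = (Real.sqrt (ρ x / N) : ℂ) *
        Complex.exp (Complex.I * (k : ℂ) * (f (x ⟨0, hd⟩) : ℂ)))
    (k : ℤ) :
    (∫ x, ∑ j : Fin d, ‖fderiv ℝ (φ k) x (Pi.single j 1)‖ ^ 2) ≤
      (1 / N) * (1 + 16 * Real.pi ^ 2 * (k : ℝ) ^ 2) *
        ∫ x, ∑ j : Fin d, ‖fderiv ℝ u x (Pi.single j 1)‖ ^ 2 := by
  obtain ⟨n, rfl⟩ : ∃ n, d = n + 1 := ⟨d - 1, (Nat.succ_pred_eq_of_pos hd).symm⟩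
  have hidx : (⟨0, hd⟩ : Fin (n+1)) = 0 := rfl
  rw [hidx] at hf hφ
  have hNpos : (0:ℝ) < N := by exact_mod_cast hN
  set c : ℝ := Real.sqrt N with hcdef
  have hcpos : 0 < c := Real.sqrt_pos.2 hNpos
  have hc2 : c ^ 2 = N := Real.sq_sqrt hNpos.le
  -- rewrite φ k
  have hφ' : φ k = fun y => ((u y / c : ℝ) : ℂ) *
      Complex.exp (Complex.I * (k:ℂ) * (f (y 0) : ℂ)) := by
    funext y
    rw [hφ k y, hρ y]
    congr 2
    rw [Real.sqrt_div (sq_nonneg _), Real.sqrt_sq (hu0 y)]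
  -- basic differentiability facts
  have hudiff : ∀ x, DifferentiableAt ℝ u x := fun x => (hu1.differentiable one_ne_zero) x
  have hDucont : Continuous fun x => fderiv ℝ u x := hu1.continuous_fderiv one_ne_zero
  set v : Fin (n+1) → ℝ := Pi.single 0 1 with hvdef
  have hDuvcont : Continuous fun x => fderiv ℝ u x v :=
    (ContinuousLinearMap.apply ℝ ℝ v).continuous.comp hDucont
  set q : (Fin (n+1) → ℝ) → ℝ := fun x => 2 * u x * fderiv ℝ u x v with hqdef
  have hqcont : Continuous q := by
    exact ((continuous_const.mul (hu1.continuous)).mul hDuvcont)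
  have hDuv2int : Integrable (fun x => ‖fderiv ℝ u x v‖ ^ 2) := by
    apply hgradint.mono' ((hDuvcont.norm.pow 2).aestronglyMeasurable)
    refine Filter.Eventually.of_forall fun x => ?_
    rw [Real.norm_eq_abs, _root_.abs_of_nonneg (sq_nonneg _)]
    exact Finset.single_le_sum (f := fun j => ‖fderiv ℝ u x (Pi.single j 1)‖ ^ 2)
      (fun j _ => sq_nonneg _) (Finset.mem_univ 0)
  have hqint : Integrable q := by
    apply (huint.add hDuv2int).mono' hqcont.aestronglyMeasurable
    refine Filter.Eventually.of_forall fun x => ?_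
    have h1 : ‖q x‖ = 2 * |u x| * |fderiv ℝ u x v| := by
      rw [hqdef, Real.norm_eq_abs, abs_mul, abs_mul]; norm_num
    have h2 : ‖fderiv ℝ u x v‖ = |fderiv ℝ u x v| := Real.norm_eq_abs _
    rw [h1]; simp only [Pi.add_apply]; rw [h2]
    nlinarith [sq_nonneg (|u x| - |fderiv ℝ u x v|), abs_nonneg (u x),
      abs_nonneg (fderiv ℝ u x v), _root_.sq_abs (u x), _root_.sq_abs (fderiv ℝ u x v)]
  set G : ℝ := ∫ x, ‖q x‖ with hGdef
  have hG0 : 0 ≤ G := integral_nonneg fun x => norm_nonneg _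
  set K : ℝ := ∫ x, ∑ j : Fin (n+1), ‖fderiv ℝ u x (Pi.single j 1)‖ ^ 2 with hKdef
  have hK0 : 0 ≤ K := integral_nonneg fun x => Finset.sum_nonneg fun j _ => sq_nonneg _
  set K₀ : ℝ := ∫ x, ‖fderiv ℝ u x v‖ ^ 2 with hK₀def
  have hK₀0 : 0 ≤ K₀ := integral_nonneg fun x => sq_nonneg _
  have hK₀K : K₀ ≤ K := by
    apply integral_mono hDuv2int hgradint
    intro x
    exact Finset.single_le_sum (f := fun j => ‖fderiv ℝ u x (Pi.single j 1)‖ ^ 2)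
      (fun j _ => sq_nonneg _) (Finset.mem_univ 0)
  -- Cauchy-Schwarz
  have hG2 : G ^ 2 ≤ 4 * N * K₀ := by
    have hpq : Real.HolderConjugate 2 2 := Real.HolderConjugate.two_two
    have hmu : MemLp (fun x => |u x|) (ENNReal.ofReal 2) (volume : Measure (Fin (n+1) → ℝ)) := by
      rw [show ENNReal.ofReal 2 = 2 by norm_num]
      rw [memLp_two_iff_integrable_sq (hu1.continuous.abs.aestronglyMeasurable)]
      exact huint.congr (Filter.Eventually.of_forall fun x => by simp [_root_.sq_abs])
    have hmv : MemLp (fun x => |fderiv ℝ u x v|) (ENNReal.ofReal 2)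
        (volume : Measure (Fin (n+1) → ℝ)) := by
      rw [show ENNReal.ofReal 2 = 2 by norm_num]
      rw [memLp_two_iff_integrable_sq (hDuvcont.abs.aestronglyMeasurable)]
      apply hDuv2int.congr
      refine Filter.Eventually.of_forall fun x => ?_
      simp [Real.norm_eq_abs]
    have hCS := integral_mul_le_Lp_mul_Lq_of_nonneg hpq
      (Filter.Eventually.of_forall fun x => abs_nonneg (u x))
      (Filter.Eventually.of_forall fun x => abs_nonneg (fderiv ℝ u x v)) hmu hmv
    have hu2 : ∫ x : Fin (n+1) → ℝ, |u x| ^ (2:ℝ) = (N:ℝ) := by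
      rw [← huN]
      apply integral_congr_ae
      refine Filter.Eventually.of_forall fun x => ?_
      have hh : |u x| ^ (2:ℝ) = |u x| ^ (2:ℕ) := by
        rw [show ((2:ℝ) = ((2:ℕ):ℝ)) by norm_num, Real.rpow_natCast]
      simp only [hh, _root_.sq_abs]
    have hv2 : ∫ x : Fin (n+1) → ℝ, |fderiv ℝ u x v| ^ (2:ℝ) = K₀ := by
      rw [hK₀def]
      apply integral_congr_ae
      refine Filter.Eventually.of_forall fun x => ?_
      have hh : |fderiv ℝ u x v| ^ (2:ℝ) = |fderiv ℝ u x v| ^ (2:ℕ) := by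
        rw [show ((2:ℝ) = ((2:ℕ):ℝ)) by norm_num, Real.rpow_natCast]
      simp only [hh, _root_.sq_abs, Real.norm_eq_abs]
    rw [hu2, hv2] at hCS
    have hGeq : G = 2 * ∫ x : Fin (n+1) → ℝ, |u x| * |fderiv ℝ u x v| := by
      rw [hGdef, ← integral_const_mul]
      apply integral_congr_ae
      refine Filter.Eventually.of_forall fun x => ?_
      show ‖q x‖ = 2 * (|u x| * |fderiv ℝ u x v|)
      rw [show q x = 2 * u x * fderiv ℝ u x v from rfl, Real.norm_eq_abs, abs_mul, abs_mul]
      norm_num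
      ring
    have hI0 : 0 ≤ ∫ x : Fin (n+1) → ℝ, |u x| * |fderiv ℝ u x v| :=
      integral_nonneg fun x => mul_nonneg (abs_nonneg _) (abs_nonneg _)
    have hsq : ((N:ℝ) ^ (1/(2:ℝ)) * K₀ ^ (1/(2:ℝ))) ^ 2 = (N:ℝ) * K₀ := by
      rw [mul_pow, ← Real.rpow_natCast ((N:ℝ) ^ (1/(2:ℝ))) 2,
        ← Real.rpow_natCast (K₀ ^ (1/(2:ℝ))) 2, ← Real.rpow_mul hNpos.le,
        ← Real.rpow_mul hK₀0]
      norm_num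
    rw [hGeq]
    have h5 : (2 * ∫ x : Fin (n+1) → ℝ, |u x| * |fderiv ℝ u x v|) ^ 2
        = 4 * (∫ x : Fin (n+1) → ℝ, |u x| * |fderiv ℝ u x v|) ^ 2 := by ring
    rw [h5]
    have h6 : (∫ x : Fin (n+1) → ℝ, |u x| * |fderiv ℝ u x v|) ^ 2
        ≤ ((N:ℝ) ^ (1/(2:ℝ)) * K₀ ^ (1/(2:ℝ))) ^ 2 := by
      apply pow_le_pow_left₀ hI0 hCS
    calc 4 * (∫ x : Fin (n+1) → ℝ, |u x| * |fderiv ℝ u x v|) ^ 2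
        ≤ 4 * ((N:ℝ) ^ (1/(2:ℝ)) * K₀ ^ (1/(2:ℝ))) ^ 2 := by linarith
      _ = 4 * N * K₀ := by rw [hsq]; ring
  -- measure-preserving splitting
  set e := MeasurableEquiv.piFinSuccAbove (fun _ : Fin (n+1) => ℝ) 0 with hedef
  have mp : MeasurePreserving e volume ((volume : Measure ℝ).prod (volume : Measure (Fin n → ℝ))) :=
    volume_preserving_piFinSuccAbove _ 0
  have hesymm : ∀ z : ℝ × (Fin n → ℝ), e.symm z = Fin.cons z.1 z.2 := by
    intro z
    simp [hedef, MeasurableEquiv.piFinSuccAbove, Fin.insertNthEquiv, Fin.insertNth_zero]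
  have hρ0 : ∀ x, 0 ≤ ρ x := fun x => (hρ x) ▸ sq_nonneg _
  have hρint : Integrable ρ := by
    have : ρ = fun x => u x ^ 2 := funext hρ
    rw [this]; exact huint
  have hcomp : ∀ w : (Fin (n+1) → ℝ) → ℝ, Integrable w →
      Integrable (fun z : ℝ × (Fin n → ℝ) => w (Fin.cons z.1 z.2))
        ((volume : Measure ℝ).prod volume) := by
    intro w hw
    have heq : (fun z : ℝ × (Fin n → ℝ) => w (Fin.cons z.1 z.2)) = w ∘ e.symm := by
      funext z; rw [Function.comp_apply, hesymm]
    rw [heq]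
    exact ((mp.symm e).integrable_comp_emb e.symm.measurableEmbedding).2 hw
  have hρ'int : Integrable (fun z : ℝ × (Fin n → ℝ) => ρ (Fin.cons z.1 z.2))
      ((volume : Measure ℝ).prod volume) := hcomp ρ hρint
  have hq'int : Integrable (fun z : ℝ × (Fin n → ℝ) => q (Fin.cons z.1 z.2))
      ((volume : Measure ℝ).prod volume) := hcomp q hqint
  set Φ : (Fin n → ℝ) → ℝ := fun y => ∫ s, ‖q (Fin.cons s y)‖ with hΦdef
  have hΦint : Integrable Φ := hq'int.integral_norm_prod_right
  have hΦG : ∫ y, Φ y = G := by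
    have h1 : G = ∫ z : ℝ × (Fin n → ℝ), ‖q (Fin.cons z.1 z.2)‖
        ∂((volume : Measure ℝ).prod volume) := by
      rw [hGdef]
      have heq : (fun z : ℝ × (Fin n → ℝ) => ‖q (Fin.cons z.1 z.2)‖)
          = (fun x => ‖q x‖) ∘ e.symm := by
        funext z; rw [Function.comp_apply, hesymm]
      rw [heq]
      exact ((mp.symm e).integral_comp e.symm.measurableEmbedding _).symm
    rw [h1, integral_prod_symm _ hq'int.norm]
  -- the slice bound
  have hslice : ∀ᵐ y : Fin n → ℝ, ∀ t : ℝ, ρ (Fin.cons t y) ≤ Φ y := by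
    filter_upwards [hρ'int.prod_left_ae, hq'int.prod_left_ae] with y h1 h2
    intro t
    -- the line map and its derivative
    have hL : ∀ s : ℝ, HasDerivAt (fun σ : ℝ => Fin.cons σ y) v s := by
      intro s
      have hfun : (fun σ : ℝ => Fin.cons σ y) = fun σ : ℝ => Fin.cons (0:ℝ) y + σ • v := by
        funext σ
        funext i
        refine Fin.cases ?_ (fun j => ?_) i
        · simp [hvdef]
        · simp [hvdef, Pi.single_apply, Fin.succ_ne_zero]
      rw [hfun]
      simpa using ((hasDerivAt_id s).smul_const v).const_add (Fin.cons (0:ℝ) y)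
    have hw : ∀ s : ℝ, HasDerivAt (fun σ : ℝ => ρ (Fin.cons σ y)) (q (Fin.cons s y)) s := by
      intro s
      have hu' : HasDerivAt (fun σ : ℝ => u (Fin.cons σ y))
          (fderiv ℝ u (Fin.cons s y) v) s :=
        (hudiff (Fin.cons s y)).hasFDerivAt.comp_hasDerivAt s (hL s)
      have hsq : HasDerivAt (fun σ : ℝ => u (Fin.cons σ y) * u (Fin.cons σ y)) _ s := hu'.mul hu'
      have heq : (fun σ : ℝ => ρ (Fin.cons σ y)) = fun σ : ℝ =>
          u (Fin.cons σ y) * u (Fin.cons σ y) := by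
        funext σ; rw [hρ]; ring
      rw [heq, hqdef]
      convert hsq using 1
      ring
    have hqy : Integrable (fun s : ℝ => q (Fin.cons s y)) := h2
    have hftc : ∀ a : ℝ, a ≤ t → ρ (Fin.cons t y) ≤ ρ (Fin.cons a y) + Φ y := by
      intro a ha
      have hii : IntervalIntegrable (fun s : ℝ => q (Fin.cons s y)) volume a t :=
        hqy.intervalIntegrable
      have heq := intervalIntegral.integral_eq_sub_of_hasDerivAt
        (fun s _ => hw s) hii
      have hb : (∫ s in a..t, q (Fin.cons s y)) ≤ Φ y := by
        calc (∫ s in a..t, q (Fin.cons s y)) ≤ |∫ s in a..t, q (Fin.cons s y)| := le_abs_self _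
          _ ≤ ∫ s in a..t, ‖q (Fin.cons s y)‖ := by
              rw [← Real.norm_eq_abs]
              exact intervalIntegral.norm_integral_le_integral_norm ha
          _ ≤ Φ y := by
              rw [intervalIntegral.integral_of_le ha, hΦdef]
              have := setIntegral_le_integral (μ := volume) (s := Set.Ioc a t) hqy.norm
                (Filter.Eventually.of_forall fun s => norm_nonneg _)
              exact this
      linarith [heq, hb]
    -- choose a with small value
    have hsmall : ∀ ε : ℝ, 0 < ε → ∃ a : ℝ, a ≤ t ∧ ρ (Fin.cons a y) ≤ ε := by
      intro ε hε
      by_contra hcon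
      push_neg at hcon
      have hconst : Integrable (fun _ : ℝ => ε) (volume.restrict (Set.Iic t)) := by
        apply Integrable.mono (h1.restrict (s := Set.Iic t)) aestronglyMeasurable_const
        rw [ae_restrict_iff' measurableSet_Iic]
        refine Filter.Eventually.of_forall fun a ha => ?_
        rw [Real.norm_eq_abs, Real.norm_eq_abs, _root_.abs_of_nonneg hε.le,
          _root_.abs_of_nonneg (hρ0 _)]
        exact (hcon a ha).le
      rw [integrable_const_iff] at hconst
      rcases hconst with h' | h'
      · exact hε.ne' h'
      · have h'' := h'.measure_univ_lt_top
        rw [Measure.restrict_apply_univ, Real.volume_Iic] at h''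
        exact (lt_irrefl _ h'').elim
    have : ∀ ε : ℝ, 0 < ε → ρ (Fin.cons t y) ≤ Φ y + ε := by
      intro ε hε
      obtain ⟨a, ha, hval⟩ := hsmall ε hε
      have := hftc a ha
      linarith
    exact le_of_forall_pos_le_add this
  have hgbound : ∀ s : ℝ, (∫ y : Fin n → ℝ, ρ (Fin.cons s y)) ≤ G := by
    intro s
    by_cases hi : Integrable (fun y => ρ (Fin.cons s y))
    · refine le_trans ?_ (le_of_eq hΦG)
      apply integral_mono_ae hi hΦint
      filter_upwards [hslice] with y hy using hy s
    · rw [integral_undef hi]; exact hG0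
  -- Lipschitz bound for f
  set C : ℝ := 2 * Real.pi / N * G with hCdef
  have hC0 : 0 ≤ C := by
    apply mul_nonneg (div_nonneg (by positivity) hNpos.le) hG0
  have hgbarint : Integrable (fun s : ℝ => ∫ y : Fin n → ℝ, ρ (Fin.cons s y)) :=
    hρ'int.integral_prod_left
  have hstrip : ∀ t₁ t₂ : ℝ, t₁ ≤ t₂ → f t₂ - f t₁ ≤ C * (t₂ - t₁) := by
    intro t₁ t₂ h
    rw [hf t₁, hf t₂, ← mul_sub, hCdef, mul_assoc]
    apply mul_le_mul_of_nonneg_left _ (by positivity)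
    have hU : {y : Fin (n+1) → ℝ | y 0 ≤ t₂}
        = {y : Fin (n+1) → ℝ | y 0 ≤ t₁} ∪ {y : Fin (n+1) → ℝ | t₁ < y 0 ∧ y 0 ≤ t₂} := by
      ext y
      simp only [Set.mem_setOf_eq, Set.mem_union]
      constructor
      · intro hy
        rcases le_or_gt (y 0) t₁ with h' | h'
        · exact Or.inl h'
        · exact Or.inr ⟨h', hy⟩
      · rintro (h' | ⟨h1, h2⟩)
        · exact h'.trans h
        · exact h2
    have hdisj : Disjoint {y : Fin (n+1) → ℝ | y 0 ≤ t₁}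
        {y : Fin (n+1) → ℝ | t₁ < y 0 ∧ y 0 ≤ t₂} := by
      rw [Set.disjoint_left]
      rintro y (hy1 : y 0 ≤ t₁) ⟨hy2, -⟩
      exact absurd hy2 (not_lt.2 hy1)
    have hmeas2 : MeasurableSet {y : Fin (n+1) → ℝ | t₁ < y 0 ∧ y 0 ≤ t₂} := by
      have : {y : Fin (n+1) → ℝ | t₁ < y 0 ∧ y 0 ≤ t₂}
          = (fun y : Fin (n+1) → ℝ => y 0) ⁻¹' (Set.Ioc t₁ t₂) := rfl
      rw [this]
      exact measurableSet_Ioc.preimage (measurable_pi_apply 0)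
    have hsplit : (∫ y in {y : Fin (n+1) → ℝ | y 0 ≤ t₂}, ρ y)
        - (∫ y in {y : Fin (n+1) → ℝ | y 0 ≤ t₁}, ρ y)
        = ∫ y in {y : Fin (n+1) → ℝ | t₁ < y 0 ∧ y 0 ≤ t₂}, ρ y := by
      rw [hU, setIntegral_union hdisj hmeas2 hρint.integrableOn hρint.integrableOn]
      ring
    rw [hsplit]
    have hpre : {y : Fin (n+1) → ℝ | t₁ < y 0 ∧ y 0 ≤ t₂}
        = ⇑e ⁻¹' ((Set.Ioc t₁ t₂) ×ˢ (Set.univ : Set (Fin n → ℝ))) := by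
      ext y
      simp only [Set.mem_preimage, Set.mem_prod, Set.mem_univ, and_true, Set.mem_Ioc,
        Set.mem_setOf_eq]
      exact Iff.rfl
    have htrans : (∫ y in {y : Fin (n+1) → ℝ | t₁ < y 0 ∧ y 0 ≤ t₂}, ρ y)
        = ∫ s in Set.Ioc t₁ t₂, (∫ y : Fin n → ℝ, ρ (Fin.cons s y)) := by
      rw [hpre]
      have h1 : (∫ x in ⇑e ⁻¹' ((Set.Ioc t₁ t₂) ×ˢ (Set.univ : Set (Fin n → ℝ))), ρ x)
          = ∫ z in (Set.Ioc t₁ t₂) ×ˢ (Set.univ : Set (Fin n → ℝ)), ρ (e.symm z)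
            ∂((volume : Measure ℝ).prod volume) := by
        rw [← mp.setIntegral_preimage_emb e.measurableEmbedding (fun z => ρ (e.symm z))]
        congr 1
        funext x
        rw [e.symm_apply_apply]
      rw [h1]
      have h2 : IntegrableOn (fun z : ℝ × (Fin n → ℝ) => ρ (e.symm z))
          ((Set.Ioc t₁ t₂) ×ˢ (Set.univ : Set (Fin n → ℝ)))
          ((volume : Measure ℝ).prod volume) := by
        apply Integrable.integrableOn
        have heq : (fun z : ℝ × (Fin n → ℝ) => ρ (e.symm z))
            = fun z : ℝ × (Fin n → ℝ) => ρ (Fin.cons z.1 z.2) := by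
          funext z; rw [hesymm]
        rw [heq]; exact hρ'int
      rw [setIntegral_prod _ h2]
      rw [Measure.restrict_univ]
      apply setIntegral_congr_fun measurableSet_Ioc
      intro s _
      simp only [hesymm]
    rw [htrans]
    calc (∫ s in Set.Ioc t₁ t₂, (∫ y : Fin n → ℝ, ρ (Fin.cons s y)))
        ≤ ∫ _ in Set.Ioc t₁ t₂, G := by
          apply setIntegral_mono_on hgbarint.integrableOn
            (integrableOn_const (by rw [Real.volume_Ioc]; exact ENNReal.ofReal_ne_top))
            measurableSet_Ioc
          intro s _
          exact hgbound s
      _ = G * (t₂ - t₁) := by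
          rw [setIntegral_const, measureReal_def, Real.volume_Ioc, ENNReal.toReal_ofReal (by linarith)]
          rw [smul_eq_mul, mul_comm]
  have hmono : Monotone f := by
    intro t₁ t₂ h
    rw [hf t₁, hf t₂]
    apply mul_le_mul_of_nonneg_left _ (by positivity)
    apply setIntegral_mono_set hρint.integrableOn
      (Filter.Eventually.of_forall fun x => hρ0 x)
    exact HasSubset.Subset.eventuallyLE fun y (hy : y 0 ≤ t₁) => hy.trans h
  have hlip : LipschitzWith C.toNNReal f := by
    apply LipschitzWith.of_dist_le_mul
    intro t₁ t₂
    rw [Real.dist_eq, Real.dist_eq, Real.coe_toNNReal _ hC0]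
    rcases le_total t₁ t₂ with h | h
    · rw [_root_.abs_of_nonpos (by linarith [hmono h]), _root_.abs_of_nonpos (by linarith)]
      have := hstrip t₁ t₂ h; nlinarith
    · rw [_root_.abs_of_nonneg (by linarith [hmono h]), _root_.abs_of_nonneg (by linarith)]
      have := hstrip t₂ t₁ h; nlinarith
  have hfae : ∀ᵐ t : ℝ, DifferentiableAt ℝ f t := hlip.ae_differentiableAt
  have hderiv_bd : ∀ t : ℝ, DifferentiableAt ℝ f t → |deriv f t| ≤ C := by
    intro t ht
    have h1 := (ht.hasDerivAt.hasFDerivAt).le_of_lipschitz hlip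
    calc |deriv f t| = ‖(ContinuousLinearMap.smulRight (1 : ℝ →L[ℝ] ℝ) (deriv f t))‖ := by
          rw [ContinuousLinearMap.norm_smulRight_apply]; simp [Real.norm_eq_abs]
      _ ≤ C.toNNReal := h1
      _ = C := Real.coe_toNNReal _ hC0
  -- pull the a.e. differentiability to the product space
  have hxae : ∀ᵐ x : Fin (n+1) → ℝ, DifferentiableAt ℝ f (x 0) := by
    have hnull : volume {t : ℝ | ¬ DifferentiableAt ℝ f t} = 0 := ae_iff.1 hfae
    obtain ⟨A, hsub, hmeasA, hA0⟩ := exists_measurable_superset_of_null hnull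
    have hpre : volume (⇑e ⁻¹' (A ×ˢ (Set.univ : Set (Fin n → ℝ)))) = 0 := by
      rw [mp.measure_preimage (hmeasA.prod MeasurableSet.univ).nullMeasurableSet]
      rw [Measure.prod_prod, hA0, zero_mul]
    rw [ae_iff]
    apply measure_mono_null _ hpre
    intro x hx
    simp only [Set.mem_preimage, Set.mem_prod, Set.mem_univ, and_true]
    have he1 : (e x).1 = x 0 := rfl
    rw [he1]
    exact hsub hx
  -- the pointwise bound
  set F : (Fin (n+1) → ℝ) → ℝ := fun x =>
    (∑ j : Fin (n+1), ‖fderiv ℝ u x (Pi.single j 1)‖ ^ 2) / N + (k:ℝ)^2 * C^2 * (u x)^2 / N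
    with hFdef
  have hbound : ∀ᵐ x : Fin (n+1) → ℝ,
      ∑ j : Fin (n+1), ‖fderiv ℝ (φ k) x (Pi.single j 1)‖ ^ 2 ≤ F x := by
    filter_upwards [hxae] with x hx
    rw [hφ']
    rw [phi_sum_deriv n u f k c hcpos x (hudiff x) hx]
    rw [hc2]
    show _ ≤ (∑ j : Fin (n+1), ‖fderiv ℝ u x (Pi.single j 1)‖ ^ 2) / N
      + (k:ℝ)^2 * C^2 * (u x)^2 / N
    have h1 : (deriv f (x 0))^2 ≤ C^2 := by
      have := hderiv_bd (x 0) hx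
      nlinarith [abs_nonneg (deriv f (x 0)), sq_abs (deriv f (x 0))]
    have h4 : (k:ℝ)^2 * (deriv f (x 0))^2 * (u x)^2 / N ≤ (k:ℝ)^2 * C^2 * (u x)^2 / N := by
      gcongr
    linarith
  have hFint : Integrable F := by
    apply Integrable.add
    · exact (hgradint.div_const _)
    · have := huint.const_mul ((k:ℝ)^2 * C^2)
      apply Integrable.div_const
      exact this.congr (Filter.Eventually.of_forall fun x => by ring)
  have hmain : (∫ x, ∑ j : Fin (n+1), ‖fderiv ℝ (φ k) x (Pi.single j 1)‖ ^ 2) ≤ ∫ x, F x := by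
    apply integral_mono_of_nonneg
    · exact Filter.Eventually.of_forall fun x => Finset.sum_nonneg fun j _ => sq_nonneg _
    · exact hFint
    · exact hbound
  have hFval : ∫ x, F x = K / N + (k:ℝ)^2 * C^2 := by
    simp only [hFdef]
    rw [integral_add (hgradint.div_const _) ?h2]
    case h2 =>
      have := huint.const_mul ((k:ℝ)^2 * C^2)
      apply Integrable.div_const
      exact this.congr (Filter.Eventually.of_forall fun x => by ring)
    rw [integral_div, ← hKdef]
    congr 1
    have : ∫ x, (k:ℝ)^2 * C^2 * (u x)^2 / N = ((k:ℝ)^2 * C^2 / N) * ∫ x, u x ^2 := by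
      rw [← integral_const_mul]
      congr 1; funext x; ring
    rw [this, huN]
    field_simp
  -- final arithmetic
  have hCsq : C^2 ≤ 16 * Real.pi^2 * K / N := by
    have h4 : G^2 ≤ 4 * N * K := le_trans hG2 (by nlinarith)
    rw [hCdef]
    have hpi : (0:ℝ) < Real.pi := Real.pi_pos
    have expand : (2 * Real.pi / (N:ℝ) * G)^2 = 4*Real.pi^2/(N:ℝ)^2 * G^2 := by ring
    have h5 : 4*Real.pi^2/(N:ℝ)^2 * G^2 ≤ 4*Real.pi^2/(N:ℝ)^2 * (4*N*K) :=
      mul_le_mul_of_nonneg_left h4 (by positivity)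
    have h6 : 4*Real.pi^2/(N:ℝ)^2 * (4*(N:ℝ)*K) = 16*Real.pi^2*K/N := by
      field_simp; ring
    rw [expand]; linarith
  calc (∫ x, ∑ j : Fin (n+1), ‖fderiv ℝ (φ k) x (Pi.single j 1)‖ ^ 2) ≤ ∫ x, F x := hmain
    _ = K / N + (k:ℝ)^2 * C^2 := hFval
    _ ≤ K / N + (k:ℝ)^2 * (16 * Real.pi^2 * K / N) := by
        have := mul_le_mul_of_nonneg_left hCsq (sq_nonneg (k:ℝ))
        linarith
    _ = (1 / N) * (1 + 16 * Real.pi ^ 2 * (k : ℝ) ^ 2) * K := by field_simp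
end
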